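/- arXiv:2504.16443 — 2 statements merged into one kernel-verified Lean document; each statement's English description precedes it below -/
import Mathlib

section
/- For two closed intervals P = [a,b] and G = [c,d] with a ≤ b and c ≤ d, the one-dimensional GIoU, defined as GIoU(P,G) = |P∩G|/|P∪G| − (|C| − |P∪G|)/|C| where C is the smallest interval containing both P and G, |P∩G| = max(0, min(b,d) − max(a,c)), |P∪G| = (b−a)+(d−c)−|P∩G|, and |C| = max(b,d) − min(a,c), satisfies GIoU(P,G) = (min(b,d) − max(a,c)) / (max(b,d) − min(a,c)), provided max(b,d) > min(a,c) and |P∪G| > 0. -/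
/-!
Write `I = min b d - max a c` for the signed overlap and `C = max b d - min a c` for the hull
length. Since `min + max` is the sum, `(b - a) + (d - c) = C + I`, so `|P ∪ G| = C + I - max 0 I`.
If `I ≥ 0` the union is the hull and the penalty term vanishes; if `I < 0` the intersection term
vanishes and the gap `C - |P ∪ G| = -I` gives the penalty `-I / C`. Either way GIoU is `I / C`.
-/

theorem sub_add_sub_eq_max_sub_min_add_min_sub_max (a b c d : ℝ) :
    (b - a) + (d - c) = (max b d - min a c) + (min b d - max a c) := by
  linarith [min_add_max a c, min_add_max b d]

theorem max_zero_div_sub_div_eq_div (C I : ℝ) :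
    max 0 I / (C + I - max 0 I) - (C - (C + I - max 0 I)) / C = I / C := by
  rcases le_total 0 I with hI | hI
  · rw [max_eq_right hI]
    ring
  · rw [max_eq_left hI]
    ring

theorem giou1d_simplification_general (a b c d : ℝ) :
    (max 0 (min b d - max a c)) / ((b - a) + (d - c) - max 0 (min b d - max a c))
      - ((max b d - min a c) - ((b - a) + (d - c) - max 0 (min b d - max a c)))
          / (max b d - min a c)
      = (min b d - max a c) / (max b d - min a c) := by
  rw [sub_add_sub_eq_max_sub_min_add_min_sub_max]
  exact max_zero_div_sub_div_eq_div _ _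

/-- Simplification of the one-dimensional GIoU formula: for intervals
`P = [a,b]` and `G = [c,d]`, the standard GIoU
`|P∩G|/|P∪G| − (|C| − |P∪G|)/|C|` equals
`(min b d − max a c) / (max b d − min a c)`. -/
theorem giou1d_simplification (a b c d : ℝ) (hab : a ≤ b) (hcd : c ≤ d)
    (hC : max b d - min a c > 0)
    (hU : (b - a) + (d - c) - max 0 (min b d - max a c) > 0) :
    (max 0 (min b d - max a c)) / ((b - a) + (d - c) - max 0 (min b d - max a c))
      - ((max b d - min a c) - ((b - a) + (d - c) - max 0 (min b d - max a c)))
          / (max b d - min a c)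
      = (min b d - max a c) / (max b d - min a c) :=
  giou1d_simplification_general a b c d
end

section
/- The 1D GIoU distance d(P,G) = 1 − GIoU¹ᴰ(P,G) on nonempty closed intervals satisfies the triangle inequality: for intervals P, Q, R with positive length, d(P,R) ≤ d(P,Q) + d(Q,R). -/
/-!
Hull length minus overlap is the `ℓ¹` distance `δ` between the endpoint pairs, and twice the hull
length is `|P| + |G| + δ`; hence `d(P,G) = 2δ / (|P| + |G| + δ)`. Since `x ↦ x / (s + x)` is
increasing, `δ(P,R) ≤ δ(P,Q) + δ(Q,R)` bounds `d(P,R)` by two fractions over the common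
denominator `|P| + |R| + δ(P,Q) + δ(Q,R)`, and each of these may be shrunk to the denominator of
`d(P,Q)`, resp. `d(Q,R)`, because interval lengths differ by at most their `δ`.
-/

noncomputable def giouDist (a b c d : ℝ) : ℝ := 1 - (min b d - max a c) / (max b d - min a c)

def endpointDist (a b c d : ℝ) : ℝ := |a - c| + |b - d|

lemma endpointDist_nonneg (a b c d : ℝ) : 0 ≤ endpointDist a b c d :=
  add_nonneg (abs_nonneg _) (abs_nonneg _)

lemma endpointDist_triangle (a₁ b₁ a₂ b₂ a₃ b₃ : ℝ) :
    endpointDist a₁ b₁ a₃ b₃ ≤ endpointDist a₁ b₁ a₂ b₂ + endpointDist a₂ b₂ a₃ b₃ := by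
  unfold endpointDist
  linarith [abs_sub_le a₁ a₂ a₃, abs_sub_le b₁ b₂ b₃]

lemma abs_sub_sub_le_endpointDist (a b c d : ℝ) :
    |(b - a) - (d - c)| ≤ endpointDist a b c d := by
  rw [endpointDist, add_comm, show (b - a) - (d - c) = (b - d) - (a - c) by ring]
  exact abs_sub _ _

lemma hull_sub_inter_eq_endpointDist (a b c d : ℝ) :
    (max b d - min a c) - (min b d - max a c) = endpointDist a b c d := by
  rw [endpointDist, ← max_sub_min_eq_abs' a c, ← max_sub_min_eq_abs' b d]
  ring

lemma two_mul_hull_eq (a b c d : ℝ) :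
    2 * (max b d - min a c) = (b - a) + (d - c) + endpointDist a b c d := by
  rw [endpointDist, ← max_sub_min_eq_abs' a c, ← max_sub_min_eq_abs' b d]
  linarith [min_add_max a c, min_add_max b d]

lemma giouDist_eq {a b c d : ℝ} (hab : a < b) (hcd : c < d) :
    giouDist a b c d =
      2 * (endpointDist a b c d / ((b - a) + (d - c) + endpointDist a b c d)) := by
  have hhull : 0 < max b d - min a c := by
    linarith [two_mul_hull_eq a b c d, endpointDist_nonneg a b c d]
  rw [← two_mul_hull_eq, ← hull_sub_inter_eq_endpointDist, giouDist]
  field_simp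

lemma div_add_le_div_add_of_le {s x y : ℝ} (hs : 0 < s) (hx : 0 ≤ x) (hxy : x ≤ y) :
    x / (s + x) ≤ y / (s + y) := by
  rw [div_le_div_iff₀ (by linarith) (by linarith)]
  nlinarith

lemma div_add_le_div_add_add_div_add {L₁ L₂ L₃ u v w : ℝ} (hL₁ : 0 < L₁) (hL₂ : 0 < L₂)
    (hL₃ : 0 < L₃) (hu : 0 ≤ u) (hv : 0 ≤ v) (hw : 0 ≤ w) (hwuv : w ≤ u + v)
    (hL₂₁ : L₂ ≤ L₁ + u) (hL₂₃ : L₂ ≤ L₃ + v) :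
    w / (L₁ + L₃ + w) ≤ u / (L₁ + L₂ + u) + v / (L₂ + L₃ + v) :=
  calc w / (L₁ + L₃ + w) ≤ (u + v) / (L₁ + L₃ + (u + v)) :=
        div_add_le_div_add_of_le (by linarith) hw hwuv
    _ = u / (L₁ + L₃ + (u + v)) + v / (L₁ + L₃ + (u + v)) := add_div _ _ _
    _ ≤ u / (L₁ + L₂ + u) + v / (L₂ + L₃ + v) :=
      add_le_add (div_le_div_of_nonneg_left hu (by linarith) (by linarith))
        (div_le_div_of_nonneg_left hv (by linarith) (by linarith))

/-- The 1D GIoU distance `d(P,G) = 1 − GIoU¹ᴰ(P,G)` satisfies the triangle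
inequality on nondegenerate intervals. -/
theorem giou1d_dist_triangle (a₁ b₁ a₂ b₂ a₃ b₃ : ℝ)
    (h₁ : a₁ < b₁) (h₂ : a₂ < b₂) (h₃ : a₃ < b₃) :
    1 - (min b₁ b₃ - max a₁ a₃) / (max b₁ b₃ - min a₁ a₃)
      ≤ (1 - (min b₁ b₂ - max a₁ a₂) / (max b₁ b₂ - min a₁ a₂))
        + (1 - (min b₂ b₃ - max a₂ a₃) / (max b₂ b₃ - min a₂ a₃)) := by
  change giouDist a₁ b₁ a₃ b₃ ≤ giouDist a₁ b₁ a₂ b₂ + giouDist a₂ b₂ a₃ b₃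
  rw [giouDist_eq h₁ h₃, giouDist_eq h₁ h₂, giouDist_eq h₂ h₃, ← mul_add]
  have h₁₂ := abs_le.mp (abs_sub_sub_le_endpointDist a₁ b₁ a₂ b₂)
  have h₂₃ := abs_le.mp (abs_sub_sub_le_endpointDist a₂ b₂ a₃ b₃)
  refine mul_le_mul_of_nonneg_left ?_ zero_le_two
  exact div_add_le_div_add_add_div_add (sub_pos.2 h₁) (sub_pos.2 h₂) (sub_pos.2 h₃)
    (endpointDist_nonneg ..) (endpointDist_nonneg ..) (endpointDist_nonneg ..)
    (endpointDist_triangle ..) (by linarith) (by linarith)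
end
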